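/- arXiv:2604.00180 — 3 statements merged into one kernel-verified Lean document; each statement's English description precedes it below -/
import Mathlib

section
/- Suppose for every ε > 0 there exist polynomials p_i (each depending only on variables in Δ_i), λ ∈ ℝ^{m₁} and μ ∈ ℝ^{m₂} with μ ≥ 0 such that p_1 + ... + p_m + λᵀ(Ax−b) + μᵀ(Cx−d) + f_min = 0 identically and each f_i + p_i + ε is nonnegative on the nonnegative orthant. Then for every ε > 0 and every x in the feasible set K = {x : Ax = b, Cx ≥ d, x ≥ 0}, we have f(x) ≥ f_min − mε; consequently inf_{x ∈ K} f(x) ≥ f_min. -/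
open MvPolynomial Matrix

/-- Theorem 3.1(iii), sufficiency: if for every `ε > 0` there is a sparse
certificate with `fᵢ + pᵢ + ε ≥ 0` on the nonnegative orthant, then
`f(x) ≥ f_min − m·ε` for all feasible `x` and every `ε > 0`; consequently
`f(x) ≥ f_min` on the feasible set. -/
theorem stmt3 (n m m1 m2 : ℕ) (Δ : Fin m → Finset (Fin n))
    (hcover : (⋃ i, (Δ i : Set (Fin n))) = Set.univ)
    (A : Matrix (Fin m1) (Fin n) ℝ) (b : Fin m1 → ℝ)
    (C : Matrix (Fin m2) (Fin n) ℝ) (d : Fin m2 → ℝ)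
    (f : Fin m → MvPolynomial (Fin n) ℝ) (fmin : ℝ)
    (hfsupp : ∀ i, f i ∈ MvPolynomial.supported ℝ (Δ i : Set (Fin n)))
    (hcert : ∀ ε : ℝ, 0 < ε →
      ∃ (p : Fin m → MvPolynomial (Fin n) ℝ) (lam : Fin m1 → ℝ)
        (mu : Fin m2 → ℝ),
        (∀ i, p i ∈ MvPolynomial.supported ℝ (Δ i : Set (Fin n))) ∧
        (∀ j, 0 ≤ mu j) ∧
        (∀ x : Fin n → ℝ,
          (∑ i, eval x (p i)) + lam ⬝ᵥ (A.mulVec x - b)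
            + mu ⬝ᵥ (C.mulVec x - d) + fmin = 0) ∧
        (∀ i, ∀ x : Fin n → ℝ, (∀ j, 0 ≤ x j) →
          0 ≤ eval x (f i) + eval x (p i) + ε)) :
    (∀ ε : ℝ, 0 < ε → ∀ x : Fin n → ℝ,
      A.mulVec x = b → (∀ j, d j ≤ C.mulVec x j) → (∀ j, 0 ≤ x j) →
      fmin - m * ε ≤ eval x (∑ i, f i)) ∧
    (∀ x : Fin n → ℝ,
      A.mulVec x = b → (∀ j, d j ≤ C.mulVec x j) → (∀ j, 0 ≤ x j) →
      fmin ≤ eval x (∑ i, f i)) := by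
  have key : ∀ ε : ℝ, 0 < ε → ∀ x : Fin n → ℝ,
      A.mulVec x = b → (∀ j, d j ≤ C.mulVec x j) → (∀ j, 0 ≤ x j) →
      fmin - m * ε ≤ eval x (∑ i, f i) := by
    intro ε hε x hA hC hx
    obtain ⟨p, lam, mu, _, hmu, hid, hpos⟩ := hcert ε hε
    have hid' := hid x
    rw [hA, sub_self, dotProduct_zero] at hid'
    have hmud : 0 ≤ mu ⬝ᵥ (C.mulVec x - d) := by
      apply Finset.sum_nonneg
      intro j _
      exact mul_nonneg (hmu j) (sub_nonneg.2 (hC j))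
    have hp : (∑ i, eval x (p i)) ≤ -fmin := by linarith
    have hsum : 0 ≤ (∑ i, eval x (f i)) + (∑ i, eval x (p i)) + m * ε := by
      have := Finset.sum_nonneg (fun i (_ : i ∈ Finset.univ) => hpos i x hx)
      simp only [Finset.sum_add_distrib, Finset.sum_const, Finset.card_univ,
        Fintype.card_fin, nsmul_eq_mul] at this
      linarith
    rw [map_sum]
    linarith
  refine ⟨key, fun x hA hC hx => ?_⟩
  have h : ∀ ε : ℝ, 0 < ε → fmin ≤ eval x (∑ i, f i) + ε := by
    intro ε hε
    rcases Nat.eq_zero_or_pos m with hm | hm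
    · have := key 1 one_pos x hA hC hx
      simp [hm] at this
      rw [map_sum]
      linarith
    · have hmpos : (0:ℝ) < m := Nat.cast_pos.2 hm
      have := key (ε / m) (div_pos hε hmpos) x hA hC hx
      have : fmin - ε ≤ eval x (∑ i, f i) := by
        rwa [mul_div_cancel₀ _ (ne_of_gt hmpos)] at this
      linarith
  linarith [le_of_forall_pos_le_add h]
end

section
/- Let p be a cubic polynomial in n variables whose Hessian has the affine form ∇²p(x) = A_0 + x_1·A_1 + ... + x_n·A_n for symmetric matrices A_0, A_1, ..., A_n. Then p is convex on the nonnegative orthant ℝ_+^n if and only if every A_i (i = 0, 1, ..., n) is positive semidefinite. -/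
/-!
Restricted to a line `t ↦ x + t • v`, `p` has second derivative `vᵀ H(x + t v) v`, where
`H(z) = A₀ + ∑ z_l A_l` is the Hessian. If every `Aᵢ` is positive semidefinite, so is `H(z)` for
`z ≥ 0`, and `p` is convex on each segment of the orthant. Conversely, convexity forces
`vᵀ H(z) v = vᵀA₀v + ∑ z_l vᵀA_l v ≥ 0` at every interior point `z > 0`; letting `z` shrink to `0`
gives `A₀ ⪰ 0`, and letting the `l`-th coordinate of `z` grow gives `A_l ⪰ 0`.
-/

open MvPolynomial Matrix Filter Topology

lemma nonneg_of_forall_pos_add_mul_nonneg {a b : ℝ} (h : ∀ t > 0, 0 ≤ a + t * b) :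
    0 ≤ a ∧ 0 ≤ b := by
  have hpos : ∀ᶠ t in 𝓝[>] (0 : ℝ), 0 < t := self_mem_nhdsWithin
  constructor
  · refine ge_of_tendsto ?_ (hpos.mono h)
    exact ((continuous_const.add (continuous_id.mul continuous_const)).tendsto' 0 a
      (by simp)).mono_left nhdsWithin_le_nhds
  · -- `t * a + b = t * (a + t⁻¹ * b)` tends to `b` as `t → 0⁺`
    refine ge_of_tendsto (f := fun t => t * a + b) ?_ (hpos.mono fun t ht => ?_)
    · exact (((continuous_id.mul continuous_const).add continuous_const).tendsto' 0 b
        (by simp)).mono_left nhdsWithin_le_nhds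
    · have := mul_nonneg ht.le (h t⁻¹ (inv_pos.2 ht))
      rwa [mul_add, ← mul_assoc, mul_inv_cancel₀ ht.ne', one_mul] at this

theorem ConvexOn.nonneg_of_hasDerivAt2 {S : Set ℝ} {f f' : ℝ → ℝ} {x f'' : ℝ}
    (hf : ConvexOn ℝ S f) (hS : S ∈ 𝓝 x) (hf' : ∀ y, HasDerivAt f (f' y) y)
    (hf'' : HasDerivAt f' f'' x) : 0 ≤ f'' := by
  have hmono : MonotoneOn f' S := by
    simpa [funext fun y => (hf' y).deriv] using
      hf.monotoneOn_deriv fun y _ => (hf' y).differentiableAt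
  have hacc : AccPt x (𝓟 S) :=
    ((PerfectSpace.univ_preperfect x (Set.mem_univ x)).nhds_inter hS).mono
      (principal_mono.2 Set.inter_subset_left)
  exact hf''.hasDerivWithinAt.nonneg_of_monotoneOn hacc hmono

section Pencil

variable {ι m R : Type*} [Fintype ι]

lemma dotProduct_pencil_mulVec [Fintype m] [CommSemiring R] (A0 : Matrix m m R)
    (A : ι → Matrix m m R) (z : ι → R) (v : m → R) :
    v ⬝ᵥ ((A0 + ∑ l, z l • A l) *ᵥ v) = v ⬝ᵥ (A0 *ᵥ v) + ∑ l, z l * (v ⬝ᵥ (A l *ᵥ v)) := by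
  simp [add_mulVec, dotProduct_add, sum_mulVec, dotProduct_sum, smul_mulVec]

lemma posSemidef_pencil {A0 : Matrix m m ℝ} {A : ι → Matrix m m ℝ} {z : ι → ℝ}
    (h0 : A0.PosSemidef) (hA : ∀ l, (A l).PosSemidef) (hz : ∀ l, 0 ≤ z l) :
    (A0 + ∑ l, z l • A l).PosSemidef :=
  h0.add (posSemidef_sum _ fun l _ => (hA l).smul (hz l))

lemma posSemidef_of_pencil_nonneg [Fintype m] {A0 : Matrix m m ℝ} {A : ι → Matrix m m ℝ}
    (hA0 : A0.IsSymm) (hA : ∀ l, (A l).IsSymm)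
    (h : ∀ z : ι → ℝ, (∀ l, 0 < z l) → ∀ v, 0 ≤ v ⬝ᵥ ((A0 + ∑ l, z l • A l) *ᵥ v)) :
    A0.PosSemidef ∧ ∀ l, (A l).PosSemidef := by
  classical
  refine ⟨.of_dotProduct_mulVec_nonneg (isHermitian_iff_isSymm.2 hA0) fun v => ?_,
    fun l => .of_dotProduct_mulVec_nonneg (isHermitian_iff_isSymm.2 (hA l)) fun v => ?_⟩
  · refine (nonneg_of_forall_pos_add_mul_nonneg (b := ∑ l, v ⬝ᵥ (A l *ᵥ v)) fun t ht => ?_).1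
    simpa [dotProduct_pencil_mulVec, ← Finset.mul_sum] using h (fun _ => t) (fun _ => ht) v
  · refine (nonneg_of_forall_pos_add_mul_nonneg
      (a := v ⬝ᵥ (A0 *ᵥ v) + ∑ k, v ⬝ᵥ (A k *ᵥ v)) fun t ht => ?_).2
    have hz : ∀ k, 0 < 1 + t * (Pi.single l 1 : ι → ℝ) k := fun k => by
      rw [Pi.single_apply]; split_ifs <;> linarith
    simpa [dotProduct_pencil_mulVec, add_mul, Finset.sum_add_distrib, Pi.single_apply, add_assoc]
      using h _ hz v

end Pencil

namespace MvPolynomial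

variable {σ : Type*}

noncomputable def hessian {R : Type*} [CommSemiring R] (p : MvPolynomial σ R) (x : σ → R) :
    Matrix σ σ R :=
  Matrix.of fun i j => eval x (pderiv i (pderiv j p))

variable [Fintype σ]

theorem hasDerivAt_eval_add_smul (p : MvPolynomial σ ℝ) (x v : σ → ℝ) (t : ℝ) :
    HasDerivAt (fun s => eval (x + s • v) p) (∑ i, v i * eval (x + t • v) (pderiv i p)) t := by
  classical
  induction p using MvPolynomial.induction_on with
  | C a => simpa using hasDerivAt_const t a
  | add p q hp hq => simpa [mul_add, Finset.sum_add_distrib] using hp.fun_add hq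
  | mul_X p i hp =>
    have hXi : HasDerivAt (fun s => x i + s * v i) (v i) t := by
      simpa using ((hasDerivAt_id t).mul_const (v i)).const_add (x i)
    refine (hp.fun_mul hXi).congr_deriv ?_ |>.congr_of_eventuallyEq (by simp)
    have hterm : ∀ j, v j * eval (x + t • v) (pderiv j (p * X i)) =
        v j * eval (x + t • v) (pderiv j p) * (x i + t * v i) +
          eval (x + t • v) p * (v j * (Pi.single i 1 : σ → ℝ) j) := fun j => by
      rcases eq_or_ne j i with rfl | hji
      · simp [pderiv_X]
        ring
      · simp [pderiv_X, hji, Ne.symm hji]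
        ring
    simp only [hterm, Finset.sum_add_distrib, ← Finset.sum_mul, ← Finset.mul_sum]
    simp [Pi.single_apply, mul_comm]

theorem hasDerivAt_sum_mul_eval_pderiv (p : MvPolynomial σ ℝ) (x v : σ → ℝ) (t : ℝ) :
    HasDerivAt (fun s => ∑ i, v i * eval (x + s • v) (pderiv i p))
      (v ⬝ᵥ (hessian p (x + t • v) *ᵥ v)) t := by
  refine (HasDerivAt.fun_sum fun i _ =>
    (hasDerivAt_eval_add_smul (pderiv i p) x v t).const_mul (v i)).congr_deriv ?_
  rw [dotProduct_mulVec, dotProduct_comm]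
  simp [hessian, vecMul, dotProduct, Finset.mul_sum]

variable {p : MvPolynomial σ ℝ} {s : Set (σ → ℝ)}

theorem _root_.ConvexOn.dotProduct_hessian_mulVec_nonneg {z : σ → ℝ}
    (hp : ConvexOn ℝ s (fun x => eval x p)) (hz : s ∈ 𝓝 z) (v : σ → ℝ) :
    0 ≤ v ⬝ᵥ (hessian p z *ᵥ v) := by
  have hline : ∀ t : ℝ, AffineMap.lineMap z (z + v) t = z + t • v := fun t => by
    simp [AffineMap.lineMap_apply_module', add_comm]
  have hconv :
      ConvexOn ℝ (AffineMap.lineMap z (z + v) ⁻¹' s) (fun t : ℝ => eval (z + t • v) p) := by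
    simpa [Function.comp_def, hline] using hp.comp_affineMap (AffineMap.lineMap z (z + v))
  have hnhds : AffineMap.lineMap z (z + v) ⁻¹' s ∈ 𝓝 (0 : ℝ) :=
    (AffineMap.lineMap_continuous.continuousAt).preimage_mem_nhds (by simpa using hz)
  simpa using hconv.nonneg_of_hasDerivAt2 hnhds (hasDerivAt_eval_add_smul p z v)
    (hasDerivAt_sum_mul_eval_pderiv p z v 0)

theorem convexOn_eval_of_hessian_nonneg (hs : Convex ℝ s)
    (h : ∀ z ∈ s, ∀ v, 0 ≤ v ⬝ᵥ (hessian p z *ᵥ v)) : ConvexOn ℝ s (fun x => eval x p) := by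
  refine ⟨hs, fun x hx y hy a b ha hb hab => ?_⟩
  have hseg : ∀ t ∈ Set.Icc (0 : ℝ) 1, x + t • (y - x) ∈ s := fun t ht =>
    hs.add_smul_sub_mem hx hy ht
  have hg : ConvexOn ℝ (Set.Icc (0 : ℝ) 1) (fun t : ℝ => eval (x + t • (y - x)) p) :=
    convexOn_of_hasDerivWithinAt2_nonneg (convex_Icc 0 1)
      (fun t _ => (hasDerivAt_eval_add_smul p x (y - x) t).continuousAt.continuousWithinAt)
      (fun t _ => (hasDerivAt_eval_add_smul p x (y - x) t).hasDerivWithinAt)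
      (fun t _ => (hasDerivAt_sum_mul_eval_pderiv p x (y - x) t).hasDerivWithinAt)
      (fun t ht => h _ (hseg t (interior_subset ht)) _)
  have hb' : x + b • (y - x) = a • x + b • y := by
    rw [eq_sub_of_add_eq hab]; module
  simpa [hb'] using
    hg.2 (Set.left_mem_Icc.2 zero_le_one) (Set.right_mem_Icc.2 zero_le_one) ha hb hab

end MvPolynomial

lemma setOf_forall_nonneg_mem_nhds {ι : Type*} [Finite ι] {z : ι → ℝ} (hz : ∀ i, 0 < z i) :
    {x : ι → ℝ | ∀ i, 0 ≤ x i} ∈ 𝓝 z :=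
  eventually_all.2 fun i => ((continuous_apply i).tendsto z).eventually (eventually_ge_nhds (hz i))

theorem stmt5_general (n : ℕ) (p : MvPolynomial (Fin n) ℝ)
    (A0 : Matrix (Fin n) (Fin n) ℝ) (A : Fin n → Matrix (Fin n) (Fin n) ℝ)
    (hA0 : A0.IsSymm) (hA : ∀ l, (A l).IsSymm)
    (hHess : ∀ (x : Fin n → ℝ) (i j : Fin n),
      eval x (pderiv i (pderiv j p)) = (A0 + ∑ l, x l • A l) i j) :
    ConvexOn ℝ {x : Fin n → ℝ | ∀ j, 0 ≤ x j} (fun x => eval x p) ↔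
      A0.PosSemidef ∧ ∀ l, (A l).PosSemidef := by
  have hH : ∀ x, hessian p x = A0 + ∑ l, x l • A l := fun x => Matrix.ext (hHess x)
  constructor
  · intro hconv
    refine posSemidef_of_pencil_nonneg hA0 hA fun z hz v => ?_
    rw [← hH]
    exact hconv.dotProduct_hessian_mulVec_nonneg (setOf_forall_nonneg_mem_nhds hz) v
  · rintro ⟨h0, hl⟩
    refine convexOn_eval_of_hessian_nonneg (convex_Ici 0) fun z hz v => ?_
    simpa [hH] using (posSemidef_pencil h0 hl hz).dotProduct_mulVec_nonneg v

/-- For a cubic polynomial `p` whose Hessian is the affine matrix polynomial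
`A₀ + x₁A₁ + ⋯ + x_nA_n` with the `Aᵢ` symmetric, `p` is convex on the
nonnegative orthant iff every `Aᵢ` is positive semidefinite. -/
theorem stmt5 (n : ℕ) (p : MvPolynomial (Fin n) ℝ)
    (hdeg : p.totalDegree ≤ 3)
    (A0 : Matrix (Fin n) (Fin n) ℝ) (A : Fin n → Matrix (Fin n) (Fin n) ℝ)
    (hA0 : A0.IsSymm) (hA : ∀ l, (A l).IsSymm)
    (hHess : ∀ (x : Fin n → ℝ) (i j : Fin n),
      eval x (pderiv i (pderiv j p)) = (A0 + ∑ l, x l • A l) i j) :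
    ConvexOn ℝ {x : Fin n → ℝ | ∀ j, 0 ≤ x j} (fun x => eval x p) ↔
      A0.PosSemidef ∧ ∀ l, (A l).PosSemidef :=
  stmt5_general n p A0 A hA0 hA hHess
end

section
/- Let f_1, ..., f_m be convex polynomials, where f_i depends only on the variables indexed by Δ_i ⊆ {1,...,n}, and suppose u minimizes f = f_1 + ... + f_m over K = {x : Ax = b, Cx ≥ d, x ≥ 0} with multipliers λ ∈ ℝ^{m₁}, μ ∈ ℝ_+^{m₂}, η ∈ ℝ_+^n satisfying the KKT conditions: ∇f(u) = Aᵀλ + Cᵀμ + η, μᵀ(Cu−d) = 0, ηᵀu = 0, Cu ≥ d, u ≥ 0, Au = b. Write η = η_1 + ... + η_m with each η_i ∈ ℝ_+^n supported on Δ_i, and define p_i(x) := −(x−u)ᵀ(∇f_i(u) − η_i) − f_i(u). Then: (a) p_1 + ... + p_m + λᵀ(Ax−b) + μᵀ(Cx−d) + f(u) = 0 identically, and (b) f_i(x) + p_i(x) ≥ 0 for all x ≥ 0. -/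
open MvPolynomial Matrix

/-! Convexity gives the tangent inequality `fᵢ(x) ≥ fᵢ(u) + (x - u) ⬝ ∇fᵢ(u)`. Shifting the slope by
`ηᵢ` keeps it on `x ≥ 0`: from `0 ≤ ηᵢ ≤ η` and `η ⬝ u = 0` we get `ηᵢ ⬝ u = 0`, so the shift adds
`x ⬝ ηᵢ ≥ 0`. Summed over `i`, the shifted slopes are `Aᵀλ + Cᵀμ` by the KKT gradient equation, and
`Au = b`, `μ ⬝ (Cu - d) = 0` turn the sum of the `pᵢ` into the identity (a). -/

theorem MvPolynomial.hasFDerivAt_eval {𝕜 σ : Type*} [NontriviallyNormedField 𝕜] [Fintype σ]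
    (p : MvPolynomial σ 𝕜) (x : σ → 𝕜) :
    HasFDerivAt (fun y => eval y p)
      (∑ j, eval x (pderiv j p) • ContinuousLinearMap.proj j : (σ → 𝕜) →L[𝕜] 𝕜) x := by
  induction p using MvPolynomial.induction_on with
  | C a =>
    simp only [eval_C]
    refine (hasFDerivAt_const (𝕜 := 𝕜) a x).congr_fderiv ?_
    ext v
    simp
  | add p q hp hq =>
    simp only [map_add]
    refine (hp.add hq).congr_fderiv ?_
    ext v
    simp [Finset.sum_add_distrib, add_mul]
  | mul_X p i hp =>
    classical
    simp only [eval_mul, eval_X]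
    refine (hp.mul (hasFDerivAt_apply i x)).congr_fderiv ?_
    ext v
    simp [pderiv_X, Pi.single_apply, Finset.sum_add_distrib, add_mul, Finset.mul_sum, mul_assoc,
      apply_ite (eval x)]

theorem ConvexOn.add_le_of_hasFDerivAt {E : Type*} [NormedAddCommGroup E] [NormedSpace ℝ E]
    {s : Set E} {f : E → ℝ} {f' : E →L[ℝ] ℝ} {u x : E} (hf : ConvexOn ℝ s f)
    (hu : u ∈ s) (hx : x ∈ s) (hf' : HasFDerivAt f f' u) : f u + f' (x - u) ≤ f x := by
  have hline : HasDerivAt (f ∘ AffineMap.lineMap (k := ℝ) u x) (f' (x - u)) 0 := by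
    refine HasFDerivAt.comp_hasDerivAt (0 : ℝ) ?_ AffineMap.hasDerivAt_lineMap
    simpa using hf'
  have := (hf.comp_affineMap (AffineMap.lineMap u x)).le_slope_of_hasDerivAt
    (by simpa using hu) (by simpa using hx) one_pos hline
  simp only [slope_def_field, Function.comp_apply, AffineMap.lineMap_apply_one,
    AffineMap.lineMap_apply_zero, sub_zero, div_one] at this
  linarith

theorem dotProduct_eq_zero_of_le {ι R : Type*} [Fintype ι] [Semiring R] [PartialOrder R]
    [IsOrderedRing R] {u v w : ι → R} (hu : 0 ≤ u) (hv : 0 ≤ v) (hvw : v ≤ w)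
    (hw : w ⬝ᵥ u = 0) : v ⬝ᵥ u = 0 :=
  le_antisymm (hw ▸ dotProduct_le_dotProduct_of_nonneg_right hvw hu)
    (dotProduct_nonneg_of_nonneg hv hu)

theorem MvPolynomial.eval_add_dotProduct_pderiv_le {σ : Type*} [Fintype σ]
    {p : MvPolynomial σ ℝ} (hp : ConvexOn ℝ Set.univ (fun x => eval x p)) (u x : σ → ℝ) :
    eval u p + (x - u) ⬝ᵥ (fun j => eval u (pderiv j p)) ≤ eval x p := by
  have := hp.add_le_of_hasFDerivAt (Set.mem_univ u) (Set.mem_univ x) (hasFDerivAt_eval p u)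
  simpa [dotProduct, mul_comm] using this

theorem MvPolynomial.eval_add_dotProduct_sub_le_of_nonneg {σ : Type*} [Fintype σ]
    {p : MvPolynomial σ ℝ} (hp : ConvexOn ℝ Set.univ (fun x => eval x p)) {u x ν : σ → ℝ}
    (hx : 0 ≤ x) (hν : 0 ≤ ν) (hνu : ν ⬝ᵥ u = 0) :
    eval u p + (x - u) ⬝ᵥ ((fun j => eval u (pderiv j p)) - ν) ≤ eval x p := by
  have hxν : 0 ≤ (x - u) ⬝ᵥ ν := by
    rw [sub_dotProduct, dotProduct_comm u, hνu, sub_zero]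
    exact dotProduct_nonneg_of_nonneg hx hν
  have htangent := eval_add_dotProduct_pderiv_le hp u x
  rw [dotProduct_sub]
  linarith

theorem Matrix.dotProduct_mulVec_sub {ι κ R : Type*} [Fintype ι] [Fintype κ] [CommRing R]
    (M : Matrix κ ι R) (y c : κ → R) (x u : ι → R) :
    y ⬝ᵥ (M *ᵥ x - c) = (x - u) ⬝ᵥ (Mᵀ *ᵥ y) + y ⬝ᵥ (M *ᵥ u - c) := by
  rw [mulVec_transpose, dotProduct_comm (x - u), ← dotProduct_mulVec, ← dotProduct_add,
    mulVec_sub]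
  congr 1
  abel

theorem stmt10_general (n m m1 m2 : ℕ)
    (A : Matrix (Fin m1) (Fin n) ℝ) (b : Fin m1 → ℝ)
    (C : Matrix (Fin m2) (Fin n) ℝ) (d : Fin m2 → ℝ)
    (f : Fin m → MvPolynomial (Fin n) ℝ)
    (hfconv : ∀ i, ConvexOn ℝ Set.univ (fun x : Fin n → ℝ => eval x (f i)))
    (u : Fin n → ℝ) (lam : Fin m1 → ℝ) (mu : Fin m2 → ℝ) (η : Fin n → ℝ)
    (huK : A.mulVec u = b ∧ (∀ j, d j ≤ C.mulVec u j) ∧ (∀ j, 0 ≤ u j))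
    (hKKTgrad : ∀ j, eval u (pderiv j (∑ i, f i)) =
      Aᵀ.mulVec lam j + Cᵀ.mulVec mu j + η j)
    (hcompμ : mu ⬝ᵥ (C.mulVec u - d) = 0)
    (hcompη : η ⬝ᵥ u = 0)
    (ηb : Fin m → Fin n → ℝ)
    (hηb : ∀ i j, 0 ≤ ηb i j)
    (hηsum : ∀ j, η j = ∑ i, ηb i j)
    (pp : Fin m → ((Fin n → ℝ) → ℝ))
    (hpp : ∀ i x, pp i x =
      -(∑ j, (x j - u j) * (eval u (pderiv j (f i)) - ηb i j)) - eval u (f i)) :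
    (∀ x : Fin n → ℝ,
      (∑ i, pp i x) + lam ⬝ᵥ (A.mulVec x - b) + mu ⬝ᵥ (C.mulVec x - d)
        + eval u (∑ i, f i) = 0) ∧
    (∀ i, ∀ x : Fin n → ℝ, (∀ j, 0 ≤ x j) → 0 ≤ eval x (f i) + pp i x) := by
  obtain ⟨hAu, -, hu⟩ := huK
  have hpp_dot : ∀ i x, pp i x =
      -((x - u) ⬝ᵥ ((fun j => eval u (pderiv j (f i))) - ηb i)) - eval u (f i) := hpp
  refine ⟨fun x => ?_, fun i x hx => ?_⟩
  · have hslopes :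
        ∑ i, ((fun j => eval u (pderiv j (f i))) - ηb i) = Aᵀ *ᵥ lam + Cᵀ *ᵥ mu := by
      ext j
      have hgrad := hKKTgrad j
      simp only [map_sum, hηsum] at hgrad
      simp only [Finset.sum_apply, Pi.sub_apply, Finset.sum_sub_distrib, hgrad, Pi.add_apply]
      ring
    simp only [hpp_dot, Finset.sum_sub_distrib, Finset.sum_neg_distrib, ← dotProduct_sum,
      hslopes, map_sum]
    rw [dotProduct_mulVec_sub A lam b x u, dotProduct_mulVec_sub C mu d x u, hAu, sub_self,
      dotProduct_zero, hcompμ, dotProduct_add]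
    ring
  · have hηbu : ηb i ⬝ᵥ u = 0 :=
      dotProduct_eq_zero_of_le hu (hηb i)
        (fun j => hηsum j ▸ Finset.single_le_sum (fun k _ => hηb k j) (Finset.mem_univ i)) hcompη
    rw [hpp_dot]
    linarith [eval_add_dotProduct_sub_le_of_nonneg (hfconv i) hx (hηb i) hηbu]

/-- Theorem 4.1: for convex polynomials `fᵢ` (supported on the blocks `Δᵢ`)
and a KKT point `u` of the linearly constrained problem with multipliers
`(λ, μ, η)`, `η = η₁ + ⋯ + η_m` with `ηᵢ ≥ 0` supported on `Δᵢ`, the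
polynomials `pᵢ(x) = −(x−u)ᵀ(∇fᵢ(u) − ηᵢ) − fᵢ(u)` satisfy
(a) `p₁+⋯+p_m + λᵀ(Ax−b) + μᵀ(Cx−d) + f(u) = 0` identically, and
(b) `fᵢ(x) + pᵢ(x) ≥ 0` for all `x ≥ 0`. -/
theorem stmt10 (n m m1 m2 : ℕ) (Δ : Fin m → Finset (Fin n))
    (hcover : (⋃ i, (Δ i : Set (Fin n))) = Set.univ)
    (A : Matrix (Fin m1) (Fin n) ℝ) (b : Fin m1 → ℝ)
    (C : Matrix (Fin m2) (Fin n) ℝ) (d : Fin m2 → ℝ)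
    (f : Fin m → MvPolynomial (Fin n) ℝ)
    (hfsupp : ∀ i, f i ∈ MvPolynomial.supported ℝ (Δ i : Set (Fin n)))
    (hfconv : ∀ i, ConvexOn ℝ Set.univ (fun x : Fin n → ℝ => eval x (f i)))
    (u : Fin n → ℝ) (lam : Fin m1 → ℝ) (mu : Fin m2 → ℝ) (η : Fin n → ℝ)
    (hmu : ∀ j, 0 ≤ mu j) (hη : ∀ j, 0 ≤ η j)
    (huK : A.mulVec u = b ∧ (∀ j, d j ≤ C.mulVec u j) ∧ (∀ j, 0 ≤ u j))
    (hmin : ∀ x : Fin n → ℝ,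
      A.mulVec x = b → (∀ j, d j ≤ C.mulVec x j) → (∀ j, 0 ≤ x j) →
      eval u (∑ i, f i) ≤ eval x (∑ i, f i))
    (hKKTgrad : ∀ j, eval u (pderiv j (∑ i, f i)) =
      Aᵀ.mulVec lam j + Cᵀ.mulVec mu j + η j)
    (hcompμ : mu ⬝ᵥ (C.mulVec u - d) = 0)
    (hcompη : η ⬝ᵥ u = 0)
    (ηb : Fin m → Fin n → ℝ)
    (hηb : ∀ i j, 0 ≤ ηb i j)
    (hηbsupp : ∀ i, ∀ j ∉ Δ i, ηb i j = 0)
    (hηsum : ∀ j, η j = ∑ i, ηb i j)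
    (pp : Fin m → ((Fin n → ℝ) → ℝ))
    (hpp : ∀ i x, pp i x =
      -(∑ j, (x j - u j) * (eval u (pderiv j (f i)) - ηb i j)) - eval u (f i)) :
    (∀ x : Fin n → ℝ,
      (∑ i, pp i x) + lam ⬝ᵥ (A.mulVec x - b) + mu ⬝ᵥ (C.mulVec x - d)
        + eval u (∑ i, f i) = 0) ∧
    (∀ i, ∀ x : Fin n → ℝ, (∀ j, 0 ≤ x j) → 0 ≤ eval x (f i) + pp i x) :=
  stmt10_general n m m1 m2 A b C d f hfconv u lam mu η huK hKKTgrad hcompμ hcompη ηb hηb hηsum pp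
    hpp
end
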